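/- The group GL⁺(2,ℤ) (the Pin⁺ cover of GL(2,ℤ)), defined by the presentation ⟨û, ŝ, r̂ | ŝ⁸ = 1, ŝ² = û³, r̂² = 1, r̂ŝr̂ = ŝ⁻¹, r̂ûr̂ = û⁻¹⟩, is the amalgamated free product D₁₆ ∗_{D₈} D₂₄ of dihedral groups: the presented group on generators û, ŝ, r̂ with relators {ŝ⁸, ŝ²û⁻³, r̂², r̂ŝr̂ŝ, r̂ûr̂û} is isomorphic to the pushout of the two injective group homomorphisms DihedralGroup 4 → DihedralGroup 8 (sending the rotation r 1 to r 2 and the reflection sr 0 to sr 0) and DihedralGroup 4 → DihedralGroup 12 (sending r 1 to r 3 and sr 0 to sr 0), via an isomorphism carrying ŝ to the image of r 1 ∈ DihedralGroup 8, û to the image of r 1 ∈ DihedralGroup 12, and r̂ to the images of sr 0. -/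

import Mathlib

/-- The relators `{ŝ⁸, ŝ²û⁻³, r̂², r̂ŝr̂ŝ, r̂ûr̂û}`
(with `û = FreeGroup.of 0`, `ŝ = FreeGroup.of 1`, `r̂ = FreeGroup.of 2`). -/
def glPlusRels : Set (FreeGroup (Fin 3)) :=
  {(FreeGroup.of 1) ^ 8,
   (FreeGroup.of 1) ^ 2 * ((FreeGroup.of 0)⁻¹) ^ 3,
   (FreeGroup.of 2) ^ 2,
   FreeGroup.of 2 * FreeGroup.of 1 * FreeGroup.of 2 * FreeGroup.of 1,
   FreeGroup.of 2 * FreeGroup.of 0 * FreeGroup.of 2 * FreeGroup.of 0}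

/-- `GL⁺(2,ℤ)`, the Pin⁺ cover of `GL(2,ℤ)`, presented as
`⟨û, ŝ, r̂ | ŝ⁸ = 1, ŝ² = û³, r̂² = 1, r̂ŝr̂ = ŝ⁻¹, r̂ûr̂ = û⁻¹⟩`. -/
abbrev GLplus2Z := PresentedGroup glPlusRels

/-- The homomorphism of dihedral groups induced by an additive homomorphism of the
rotation subgroups: `r k ↦ r (c k)`, `sr k ↦ sr (c k)`. -/
def dihedralMap {m n : ℕ} (c : ZMod m →+ ZMod n) : DihedralGroup m →* DihedralGroup n :=
  MonoidHom.mk'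
    (fun x => match x with
      | DihedralGroup.r k => DihedralGroup.r (c k)
      | DihedralGroup.sr k => DihedralGroup.sr (c k))
    (by
      rintro (i | i) (j | j) <;>
        simp [DihedralGroup.r_mul_r, DihedralGroup.r_mul_sr, DihedralGroup.sr_mul_r,
          DihedralGroup.sr_mul_sr, map_add, map_sub])

/-- The homomorphism `ℤ/4 → ℤ/8` sending `1 ↦ 2`. -/
def f48 : ZMod 4 →+ ZMod 8 :=
  ZMod.lift 4 ⟨(Int.castAddHom (ZMod 8)).comp (AddMonoidHom.mulRight 2), by decide⟩

/-- The homomorphism `ℤ/4 → ℤ/12` sending `1 ↦ 3`. -/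
def f412 : ZMod 4 →+ ZMod 12 :=
  ZMod.lift 4 ⟨(Int.castAddHom (ZMod 12)).comp (AddMonoidHom.mulRight 3), by decide⟩

/-- The two vertex groups of the amalgam: the dihedral groups `D₁₆` and `D₂₄`
(of orders 16 and 24). -/
def Gfam : Bool → Type
  | true => DihedralGroup 8
  | false => DihedralGroup 12

instance : (b : Bool) → Group (Gfam b)
  | true => inferInstanceAs (Group (DihedralGroup 8))
  | false => inferInstanceAs (Group (DihedralGroup 12))

/-- The amalgamating homomorphisms `D₈ → D₁₆` (`r 1 ↦ r 2`, `sr 0 ↦ sr 0`) and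
`D₈ → D₂₄` (`r 1 ↦ r 3`, `sr 0 ↦ sr 0`). -/
def amalg : (b : Bool) → DihedralGroup 4 →* Gfam b
  | true => show DihedralGroup 4 →* DihedralGroup 8 from dihedralMap f48
  | false => show DihedralGroup 4 →* DihedralGroup 12 from dihedralMap f412

/-!
The amalgam `D₁₆ ∗_{D₈} D₂₄` is presented by the union of the dihedral presentations
`⟨ŝ, r̂ | ŝ⁸, r̂², (r̂ŝ)²⟩` and `⟨û, r̂' | û¹², r̂'², (r̂'û)²⟩` together with the identifications
`ŝ² = û³`, `r̂ = r̂'` of the two images of `D₈`. Since `û¹² = ŝ⁸` follows from `ŝ² = û³`, this is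
exactly the presentation of `GL⁺(2,ℤ)`, so the universal properties of the presented group, of
the dihedral groups and of the pushout give mutually inverse homomorphisms.
-/

namespace DihedralGroup

variable {n : ℕ} {G : Type*} [Group G]

theorem hom_ext {f g : DihedralGroup n →* G} (hr : f (r 1) = g (r 1))
    (hsr : f (sr 0) = g (sr 0)) : f = g := by
  have hr' (k : ZMod n) : f (r k) = g (r k) := by
    rw [← ZMod.intCast_zmod_cast k, ← r_one_zpow, map_zpow, map_zpow, hr]
  ext (k | k)
  · exact hr' k
  · rw [← zero_add k, ← sr_mul_r, map_mul, map_mul, hsr, hr']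

theorem sr_mul_r_sq (i j : ZMod n) : (sr i * r j) ^ 2 = 1 := by
  rw [sr_mul_r, sq, sr_mul_self]

section Lift

variable [NeZero n] {a b : G}

theorem pow_val_add (ha : a ^ n = 1) (i j : ZMod n) :
    a ^ (i + j).val = a ^ i.val * a ^ j.val := by
  rw [ZMod.val_add, ← pow_eq_pow_mod _ ha, pow_add]

theorem pow_val_sub (ha : a ^ n = 1) (i j : ZMod n) :
    a ^ (j - i).val = (a ^ i.val)⁻¹ * a ^ j.val := by
  rw [eq_inv_mul_iff_mul_eq, ← pow_val_add ha, add_sub_cancel]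

theorem pow_mul_eq_mul_inv (hb : b ^ 2 = 1) (hab : (b * a) ^ 2 = 1) (m : ℕ) :
    a ^ m * b = b * (a ^ m)⁻¹ := by
  have hb' : b⁻¹ = b := inv_eq_of_mul_eq_one_right (by rw [← sq, hb])
  have hconj : b * a * b⁻¹ = a⁻¹ := by
    rw [hb', eq_inv_iff_mul_eq_one, mul_assoc, ← sq, hab]
  rw [← inv_pow, ← hconj, conj_pow, hb']
  simp only [← mul_assoc, ← sq, hb, one_mul]

def lift (ha : a ^ n = 1) (hb : b ^ 2 = 1) (hab : (b * a) ^ 2 = 1) : DihedralGroup n →* G :=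
  MonoidHom.mk'
    (fun
      | r k => a ^ k.val
      | sr k => b * a ^ k.val)
    (by
      have hswap := pow_mul_eq_mul_inv hb hab
      rintro (i | i) (j | j)
      · exact pow_val_add ha i j
      · show b * a ^ (j - i).val = a ^ i.val * (b * a ^ j.val)
        rw [pow_val_sub ha, ← mul_assoc, ← mul_assoc (a ^ i.val), hswap]
      · show b * a ^ (i + j).val = b * a ^ i.val * a ^ j.val
        rw [pow_val_add ha, mul_assoc]
      · show a ^ (j - i).val = b * a ^ i.val * (b * a ^ j.val)
        rw [pow_val_sub ha, mul_assoc b, ← mul_assoc (a ^ i.val), hswap, ← mul_assoc,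
          ← mul_assoc, ← sq, hb, one_mul])

variable (ha : a ^ n = 1) (hb : b ^ 2 = 1) (hab : (b * a) ^ 2 = 1)

@[simp] theorem lift_r (k : ZMod n) : lift ha hb hab (r k) = a ^ k.val := rfl

@[simp] theorem lift_sr (k : ZMod n) : lift ha hb hab (sr k) = b * a ^ k.val := rfl

end Lift

end DihedralGroup

@[simp] theorem dihedralMap_r {m n : ℕ} (c : ZMod m →+ ZMod n) (k : ZMod m) :
    dihedralMap c (DihedralGroup.r k) = DihedralGroup.r (c k) := rfl

@[simp] theorem dihedralMap_sr {m n : ℕ} (c : ZMod m →+ ZMod n) (k : ZMod m) :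
    dihedralMap c (DihedralGroup.sr k) = DihedralGroup.sr (c k) := rfl

theorem dihedralMap_injective {m n : ℕ} {c : ZMod m →+ ZMod n} (hc : Function.Injective c) :
    Function.Injective (dihedralMap c) := by
  rintro (i | i) (j | j) h <;> simp_all [hc.eq_iff]

theorem f48_injective : Function.Injective f48 := by decide

theorem f412_injective : Function.Injective f412 := by decide

theorem f48_one : f48 1 = 2 := rfl

theorem f412_one : f412 1 = 3 := rfl

open DihedralGroup

theorem forall_glPlusRels_lift_eq_one_iff {G : Type*} [Group G] (u s t : G) :
    (∀ w ∈ glPlusRels, FreeGroup.lift ![u, s, t] w = 1) ↔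
      s ^ 8 = 1 ∧ s ^ 2 = u ^ 3 ∧ t ^ 2 = 1 ∧ (t * s) ^ 2 = 1 ∧ (t * u) ^ 2 = 1 := by
  simp [glPlusRels, sq, ← mul_assoc, mul_inv_eq_one]

def pushoutD16 : DihedralGroup 8 →* Monoid.PushoutI amalg :=
  Monoid.PushoutI.of (φ := amalg) true

def pushoutD24 : DihedralGroup 12 →* Monoid.PushoutI amalg :=
  Monoid.PushoutI.of (φ := amalg) false

theorem pushoutD16_dihedralMap (x : DihedralGroup 4) :
    pushoutD16 (dihedralMap f48 x) = pushoutD24 (dihedralMap f412 x) :=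
  (Monoid.PushoutI.of_apply_eq_base amalg true x).trans
    (Monoid.PushoutI.of_apply_eq_base amalg false x).symm

theorem pushoutD16_r_two : pushoutD16 (r 2) = pushoutD24 (r 3) := by
  simpa [f48_one, f412_one] using pushoutD16_dihedralMap (r 1)

theorem pushoutD16_sr_zero : pushoutD16 (sr 0) = pushoutD24 (sr 0) := by
  simpa using pushoutD16_dihedralMap (sr 0)

theorem pushout_relations :
    pushoutD16 (r 1) ^ 8 = 1 ∧ pushoutD16 (r 1) ^ 2 = pushoutD24 (r 1) ^ 3 ∧
      pushoutD16 (sr 0) ^ 2 = 1 ∧ (pushoutD16 (sr 0) * pushoutD16 (r 1)) ^ 2 = 1 ∧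
      (pushoutD16 (sr 0) * pushoutD24 (r 1)) ^ 2 = 1 := by
  refine ⟨?_, ?_, ?_, ?_, ?_⟩
  · rw [← map_pow, r_one_pow_n, map_one]
  · simpa [← map_pow, r_one_pow] using pushoutD16_r_two
  · rw [← map_pow, sq, sr_mul_self, map_one]
  · rw [← map_mul, ← map_pow, sr_mul_r_sq, map_one]
  · rw [pushoutD16_sr_zero, ← map_mul, ← map_pow, sr_mul_r_sq, map_one]

namespace GLplus2Z

open PresentedGroup (of)

theorem relations :
    (of 1 : GLplus2Z) ^ 8 = 1 ∧ (of 1 : GLplus2Z) ^ 2 = of 0 ^ 3 ∧ (of 2 : GLplus2Z) ^ 2 = 1 ∧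
      (of 2 * of 1 : GLplus2Z) ^ 2 = 1 ∧ (of 2 * of 0 : GLplus2Z) ^ 2 = 1 := by
  refine (forall_glPlusRels_lift_eq_one_iff _ _ _).1 fun w hw => ?_
  convert PresentedGroup.one_of_mem hw
  ext i
  fin_cases i <;> rfl

theorem of_zero_pow_twelve : (of 0 : GLplus2Z) ^ 12 = 1 := by
  rw [show 12 = 3 * 4 from rfl, pow_mul, ← relations.2.1, ← pow_mul, relations.1]

def ofD16 : DihedralGroup 8 →* GLplus2Z :=
  DihedralGroup.lift relations.1 relations.2.2.1 relations.2.2.2.1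

def ofD24 : DihedralGroup 12 →* GLplus2Z :=
  DihedralGroup.lift of_zero_pow_twelve relations.2.2.1 relations.2.2.2.2

@[simp] theorem ofD16_r_one : ofD16 (r 1) = of 1 := pow_one _

@[simp] theorem ofD16_sr_zero : ofD16 (sr 0) = of 2 := mul_one _

@[simp] theorem ofD24_r_one : ofD24 (r 1) = of 0 := pow_one _

@[simp] theorem ofD24_sr_zero : ofD24 (sr 0) = of 2 := mul_one _

theorem ofD24_comp_dihedralMap :
    ofD24.comp (dihedralMap f412) = ofD16.comp (dihedralMap f48) := by
  refine DihedralGroup.hom_ext ?_ ?_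
  · simpa [ofD16, ofD24, f48_one, f412_one, ZMod.val_ofNat] using relations.2.1.symm
  · simp [ofD16, ofD24]

def toPushout : GLplus2Z →* Monoid.PushoutI amalg :=
  PresentedGroup.toGroup ((forall_glPlusRels_lift_eq_one_iff _ _ _).2 pushout_relations)

def ofGfam : (b : Bool) → Gfam b →* GLplus2Z
  | true => ofD16
  | false => ofD24

def ofPushout : Monoid.PushoutI amalg →* GLplus2Z :=
  Monoid.PushoutI.lift ofGfam (ofD16.comp (dihedralMap f48))
    (by rintro (_ | _); exacts [ofD24_comp_dihedralMap, rfl])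

@[simp] theorem toPushout_of_zero : toPushout (of 0) = pushoutD24 (r 1) :=
  PresentedGroup.toGroup.of _

@[simp] theorem toPushout_of_one : toPushout (of 1) = pushoutD16 (r 1) :=
  PresentedGroup.toGroup.of _

@[simp] theorem toPushout_of_two : toPushout (of 2) = pushoutD16 (sr 0) :=
  PresentedGroup.toGroup.of _

@[simp] theorem ofPushout_pushoutD16 (x : DihedralGroup 8) :
    ofPushout (pushoutD16 x) = ofD16 x :=
  Monoid.PushoutI.lift_of ofGfam _ _ (i := true) x

@[simp] theorem ofPushout_pushoutD24 (x : DihedralGroup 12) :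
    ofPushout (pushoutD24 x) = ofD24 x :=
  Monoid.PushoutI.lift_of ofGfam _ _ (i := false) x

theorem toPushout_comp_ofPushout : toPushout.comp ofPushout = MonoidHom.id _ := by
  have h16 : (toPushout.comp ofPushout).comp pushoutD16 = pushoutD16 :=
    DihedralGroup.hom_ext (by simp) (by simp)
  have h24 : (toPushout.comp ofPushout).comp pushoutD24 = pushoutD24 :=
    DihedralGroup.hom_ext (by simp) (by simp [pushoutD16_sr_zero])
  exact Monoid.PushoutI.hom_ext_nonempty fun | true => h16 | false => h24

theorem ofPushout_comp_toPushout : ofPushout.comp toPushout = MonoidHom.id _ :=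
  PresentedGroup.ext fun i => by fin_cases i <;> simp

def equivPushout : GLplus2Z ≃* Monoid.PushoutI amalg :=
  toPushout.toMulEquiv ofPushout ofPushout_comp_toPushout toPushout_comp_ofPushout

end GLplus2Z

/-- `GL⁺(2,ℤ) = ⟨û, ŝ, r̂ | ŝ⁸ = 1, ŝ² = û³, r̂² = 1, r̂ŝr̂ = ŝ⁻¹, r̂ûr̂ = û⁻¹⟩ ≅
D₁₆ ∗_{D₈} D₂₄`: the amalgamating maps are injective, send `r 1` to `r 2` and `r 3`
respectively and `sr 0` to `sr 0`, and the presented group is isomorphic to the pushout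
via an isomorphism carrying `ŝ` to the image of `r 1 ∈ D₁₆`, `û` to the image of
`r 1 ∈ D₂₄`, and `r̂` to the images of `sr 0`. -/
theorem GLplus2Z_amalgam :
    Function.Injective (amalg true) ∧
    Function.Injective (amalg false) ∧
    amalg true (DihedralGroup.r 1) = DihedralGroup.r 2 ∧
    amalg true (DihedralGroup.sr 0) = DihedralGroup.sr 0 ∧
    amalg false (DihedralGroup.r 1) = DihedralGroup.r 3 ∧
    amalg false (DihedralGroup.sr 0) = DihedralGroup.sr 0 ∧
    ∃ e : GLplus2Z ≃* Monoid.PushoutI amalg,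
      e (PresentedGroup.of 1) =
        Monoid.PushoutI.of (φ := amalg) true (DihedralGroup.r 1) ∧
      e (PresentedGroup.of 0) =
        Monoid.PushoutI.of (φ := amalg) false (DihedralGroup.r 1) ∧
      e (PresentedGroup.of 2) =
        Monoid.PushoutI.of (φ := amalg) true (DihedralGroup.sr 0) ∧
      e (PresentedGroup.of 2) =
        Monoid.PushoutI.of (φ := amalg) false (DihedralGroup.sr 0) :=
  ⟨dihedralMap_injective f48_injective, dihedralMap_injective f412_injective,
    congrArg r f48_one, congrArg sr (map_zero f48), congrArg r f412_one,
    congrArg sr (map_zero f412), GLplus2Z.equivPushout, GLplus2Z.toPushout_of_one,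
    GLplus2Z.toPushout_of_zero, GLplus2Z.toPushout_of_two,
    GLplus2Z.toPushout_of_two.trans pushoutD16_sr_zero⟩
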